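/- For every n ≥ 0, the following identity holds in the polynomial ring ℤ[x,y,s]: A_{n+1}(x,y,s) = Σ_{i=0}^{n} C(n,i) · Ā_i(x,y) · C_{n−i}(x,y,s), where C(n,i) is the binomial coefficient. -/

import Mathlib

open Finset MvPolynomial

/-- The word `π(1)π(2)⋯π(n)` of a permutation, as a function on 0-based positions. -/
def permWord {n : ℕ} (π : Equiv.Perm (Fin n)) (i : ℕ) : ℕ :=
  if h : i < n then ((π ⟨i, h⟩ : Fin n) : ℕ) + 1 else 0

/-- Number of descents. -/
def desNum {n : ℕ} (π : Equiv.Perm (Fin n)) : ℕ :=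
  ((range (n - 1)).filter fun i => permWord π (i + 1) < permWord π i).card

/-- Number of ascents. -/
def ascNum {n : ℕ} (π : Equiv.Perm (Fin n)) : ℕ :=
  ((range (n - 1)).filter fun i => permWord π i < permWord π (i + 1)).card

/-- Number of big ascents. -/
def bascNum {n : ℕ} (π : Equiv.Perm (Fin n)) : ℕ :=
  ((range (n - 1)).filter fun i => permWord π i + 2 ≤ permWord π (i + 1)).card

/-- Number of successions. -/
def sucNum {n : ℕ} (π : Equiv.Perm (Fin n)) : ℕ :=
  ((range (n - 1)).filter fun i => permWord π (i + 1) = permWord π i + 1).card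

/-- Number of excedances: indices `i` with `π(i) > i`. -/
def excNum {n : ℕ} (π : Equiv.Perm (Fin n)) : ℕ :=
  (Finset.univ.filter fun i : Fin n => (i : ℕ) < (π i : ℕ)).card

/-- Number of anti-excedances: indices `i` with `π(i) < i`. -/
def aexcNum {n : ℕ} (π : Equiv.Perm (Fin n)) : ℕ :=
  (Finset.univ.filter fun i : Fin n => (π i : ℕ) < (i : ℕ)).card

/-- Number of fixed points: indices `i` with `π(i) = i`. -/
def fixNum {n : ℕ} (π : Equiv.Perm (Fin n)) : ℕ :=
  (Finset.univ.filter fun i : Fin n => π i = i).card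

/-- The trivariate Eulerian polynomial `A_n(x,y,s) ∈ ℤ[x,y,s]`, with
`x = X 0`, `y = X 1`, `s = X 2`. -/
noncomputable def trivEuler (n : ℕ) : MvPolynomial (Fin 3) ℤ :=
  ∑ π : Equiv.Perm (Fin n), X 0 ^ bascNum π * X 1 ^ desNum π * X 2 ^ sucNum π

/-- The bivariate Eulerian polynomial `Ā_n(x,y) = Σ_π x^{asc(π)} y^{des(π)+1}` for `n ≥ 1`,
with `Ā_0 = 1`. -/
noncomputable def bivEuler : ℕ → MvPolynomial (Fin 3) ℤ
  | 0 => 1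
  | n + 1 => ∑ π : Equiv.Perm (Fin (n + 1)), X 0 ^ ascNum π * X 1 ^ (desNum π + 1)

/-- `C_n(x,y,s) = Σ_π x^{exc(π)} y^{aexc(π)} s^{fix(π)}`. -/
noncomputable def excFixPoly (n : ℕ) : MvPolynomial (Fin 3) ℤ :=
  ∑ π : Equiv.Perm (Fin n), X 0 ^ excNum π * X 1 ^ aexcNum π * X 2 ^ fixNum π

/-!
All three families obey first-order recurrences driven by the derivation
`D = x y (∂_x + ∂_y + ∂_s)`: `A_{n+1} = (y + s) A_n + D A_n` (for `n ≥ 1`),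
`Ā_{n+1} = y Ā_n + D Ā_n` and `C_{n+1} = s C_n + D C_n`. Since `D` is a derivation,
`(u + v + D)(f g) = (u + D) f · g + f · (v + D) g`, so the binomial convolution of `Ā` and `C`
obeys the recurrence of `A`, with the same initial value `A_1 = 1`.

The recurrences for `A` and `Ā` come from inserting the letter `n + 1` into the word of a
permutation of `[n]`: inserted in front it only adds a descent; inserted after a letter it breaks
the adjacent pair there (the last letter is paired with a padding `0`) into two new pairs, so the
change of the statistics only depends on the kind of pair broken. The recurrence for `C` comes from
`Equiv.Perm.decomposeFin`, which adds a new point either as a fixed point or inside a cycle.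
-/

open Equiv Equiv.Perm

theorem sum_antidiagonal_choose_nsmul_succ_of_derivation {R A : Type*} [CommSemiring R]
    [CommSemiring A] [Algebra R A] (D : Derivation R A A) (u v : A) (b c : ℕ → A)
    (hb : ∀ i, b (i + 1) = u * b i + D (b i)) (hc : ∀ j, c (j + 1) = v * c j + D (c j))
    (n : ℕ) :
    ∑ ij ∈ antidiagonal (n + 1), (n + 1).choose ij.1 • (b ij.1 * c ij.2) =
      (u + v) * (∑ ij ∈ antidiagonal n, n.choose ij.1 • (b ij.1 * c ij.2)) +
        D (∑ ij ∈ antidiagonal n, n.choose ij.1 • (b ij.1 * c ij.2)) := by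
  rw [sum_antidiagonal_choose_succ_nsmul (fun i j => b i * c j), mul_sum, map_sum,
    ← sum_add_distrib, ← sum_add_distrib]
  refine sum_congr rfl fun ij hij => ?_
  rw [Nat.choose_symm_of_eq_add (mem_antidiagonal.1 hij).symm, hb, hc, map_nsmul, D.leibniz,
    smul_eq_mul, smul_eq_mul, mul_smul_comm, ← smul_add]
  ring_nf

section Monomials

noncomputable def eulerDerivation :
    Derivation ℤ (MvPolynomial (Fin 3) ℤ) (MvPolynomial (Fin 3) ℤ) :=
  (X 0 * X 1 : MvPolynomial (Fin 3) ℤ) • (pderiv 0 + pderiv 1 + pderiv 2)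

noncomputable def monomial3 (a b c : ℕ) : MvPolynomial (Fin 3) ℤ := X 0 ^ a * X 1 ^ b * X 2 ^ c

theorem X_one_mul_monomial3 (a b c : ℕ) : X 1 * monomial3 a b c = monomial3 a (b + 1) c := by
  simp only [monomial3, pow_succ]; ring

theorem X_two_mul_monomial3 (a b c : ℕ) : X 2 * monomial3 a b c = monomial3 a b (c + 1) := by
  simp only [monomial3, pow_succ]; ring

theorem eulerDerivation_monomial3 (a b c : ℕ) :
    eulerDerivation (monomial3 a b c) =
      a • monomial3 a (b + 1) c + b • monomial3 (a + 1) b c +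
        c • monomial3 (a + 1) (b + 1) (c - 1) := by
  have hpow : ∀ (k : ℕ) (p : MvPolynomial (Fin 3) ℤ),
      (k : MvPolynomial (Fin 3) ℤ) * p ^ (k - 1) * p = k * p ^ k := by
    rintro (_ | k) p <;> simp [pow_succ, mul_assoc]
  simp only [eulerDerivation, monomial3, Derivation.coe_smul, Derivation.coe_add, Pi.smul_apply,
    Pi.add_apply, smul_eq_mul, pderiv_mul, pderiv_pow, pderiv_X_self, pderiv_X_of_ne, ne_eq,
    Fin.reduceEq, not_false_eq_true]
  linear_combination
    (X 1 ^ (b + 1) * X 2 ^ c) * hpow a (X 0) + (X 0 ^ (a + 1) * X 2 ^ c) * hpow b (X 1)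

end Monomials

section Excedances

def graphCount {n : ℕ} (R : ℕ → ℕ → Prop) [DecidableRel R] (π : Perm (Fin n)) : ℕ :=
  #{i : Fin n | R i (π i)}

theorem excNum_eq_graphCount {n : ℕ} (π : Perm (Fin n)) : excNum π = graphCount (· < ·) π :=
  rfl

theorem aexcNum_eq_graphCount {n : ℕ} (π : Perm (Fin n)) :
    aexcNum π = graphCount (fun a b => b < a) π :=
  rfl

theorem fixNum_eq_graphCount {n : ℕ} (π : Perm (Fin n)) :
    fixNum π = graphCount (fun a b => b = a) π := by
  simp only [fixNum, graphCount, Fin.val_inj]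

variable {n : ℕ} (R : ℕ → ℕ → Prop) [DecidableRel R]

theorem graphCount_decomposeFin_symm_zero (hR : ∀ a b, R (a + 1) (b + 1) ↔ R a b)
    (σ : Perm (Fin n)) :
    graphCount R (decomposeFin.symm (0, σ)) = graphCount R σ + if R 0 0 then 1 else 0 := by
  simp only [graphCount, card_filter, Fin.sum_univ_succ, decomposeFin_symm_apply_zero,
    decomposeFin_symm_apply_succ, swap_self, refl_apply, Fin.val_zero, Fin.val_succ, hR]
  omega

/-- `decomposeFin.symm ((σ x).succ, σ)` shifts all values by one and splices the new point `0`
into the cycle of `σ` between `x` and `σ x`. -/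
theorem graphCount_decomposeFin_symm_succ (hR : ∀ a b, R (a + 1) (b + 1) ↔ R a b)
    (σ : Perm (Fin n)) (x : Fin n) :
    graphCount R (decomposeFin.symm ((σ x).succ, σ)) + (if R x (σ x) then 1 else 0) =
      graphCount R σ + (if R 0 (σ x + 1) then 1 else 0) + if R (x + 1) 0 then 1 else 0 := by
  have hoff : ∀ y ∈ univ.erase x,
      (if R (y.succ : ℕ) (decomposeFin.symm ((σ x).succ, σ) y.succ) then 1 else 0) =
        if R y (σ y) then 1 else 0 := by
    intro y hy
    have hne : σ y ≠ σ x := σ.injective.ne (ne_of_mem_erase hy)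
    rw [decomposeFin_symm_apply_succ, swap_apply_of_ne_of_ne (Fin.succ_ne_zero _)
      (Fin.succ_injective _ |>.ne hne)]
    simp only [Fin.val_succ, hR]
  simp only [graphCount, card_filter, Fin.sum_univ_succ]
  rw [← add_sum_erase _ _ (mem_univ x), ← add_sum_erase univ _ (mem_univ x), sum_congr rfl hoff]
  simp only [decomposeFin_symm_apply_zero, decomposeFin_symm_apply_succ, swap_apply_right,
    Fin.val_zero, Fin.val_succ]
  omega

noncomputable def excFixWeight (π : Perm (Fin n)) : MvPolynomial (Fin 3) ℤ :=
  monomial3 (excNum π) (aexcNum π) (fixNum π)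

theorem excFixWeight_decomposeFin_symm_zero (σ : Perm (Fin n)) :
    excFixWeight (decomposeFin.symm (0, σ)) = X 2 * excFixWeight σ := by
  simp only [excFixWeight, excNum_eq_graphCount, aexcNum_eq_graphCount, fixNum_eq_graphCount,
    graphCount_decomposeFin_symm_zero (· < ·) (fun _ _ => Nat.add_lt_add_iff_right),
    graphCount_decomposeFin_symm_zero (fun a b => b < a) (fun _ _ => Nat.add_lt_add_iff_right),
    graphCount_decomposeFin_symm_zero (fun a b => b = a) (fun _ _ => Nat.add_right_cancel_iff),
    lt_irrefl, if_true, if_false, add_zero, X_two_mul_monomial3]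

theorem excFixWeight_decomposeFin_symm_succ (σ : Perm (Fin n)) (x : Fin n) :
    excFixWeight (decomposeFin.symm ((σ x).succ, σ)) =
      (if x < σ x then monomial3 (excNum σ) (aexcNum σ + 1) (fixNum σ) else 0) +
      (if σ x < x then monomial3 (excNum σ + 1) (aexcNum σ) (fixNum σ) else 0) +
      (if σ x = x then monomial3 (excNum σ + 1) (aexcNum σ + 1) (fixNum σ - 1) else 0) := by
  have he := graphCount_decomposeFin_symm_succ (· < ·) (fun _ _ => Nat.add_lt_add_iff_right) σ x
  have ha := graphCount_decomposeFin_symm_succ (fun a b => b < a)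
    (fun _ _ => Nat.add_lt_add_iff_right) σ x
  have hf := graphCount_decomposeFin_symm_succ (fun a b => b = a)
    (fun _ _ => Nat.add_right_cancel_iff) σ x
  rw [← excNum_eq_graphCount, ← excNum_eq_graphCount] at he
  rw [← aexcNum_eq_graphCount, ← aexcNum_eq_graphCount] at ha
  rw [← fixNum_eq_graphCount, ← fixNum_eq_graphCount] at hf
  simp only [Fin.val_inj, ← Fin.lt_def, Nat.succ_pos, Nat.not_lt_zero, if_true, if_false,
    add_zero, Nat.succ_ne_zero, Nat.zero_ne_add_one] at he ha hf
  set π := decomposeFin.symm ((σ x).succ, σ)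
  rcases lt_trichotomy x (σ x) with h | h | h
  · simp only [h, h.ne', h.not_gt, if_true, if_false, add_zero] at he ha hf ⊢
    rw [excFixWeight, show excNum π = excNum σ by omega,
      show aexcNum π = aexcNum σ + 1 by omega, show fixNum π = fixNum σ by omega]
  · simp only [← h, lt_irrefl, if_true, if_false, zero_add, add_zero] at he ha hf ⊢
    rw [excFixWeight, show excNum π = excNum σ + 1 by omega,
      show aexcNum π = aexcNum σ + 1 by omega, show fixNum π = fixNum σ - 1 by omega]
  · simp only [h, h.ne, h.not_gt, if_true, if_false, add_zero, zero_add] at he ha hf ⊢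
    rw [excFixWeight, show excNum π = excNum σ + 1 by omega,
      show aexcNum π = aexcNum σ by omega, show fixNum π = fixNum σ by omega]

theorem sum_excFixWeight_decomposeFin_symm (σ : Perm (Fin n)) :
    ∑ p : Fin (n + 1), excFixWeight (decomposeFin.symm (p, σ)) =
      X 2 * excFixWeight σ + eulerDerivation (excFixWeight σ) := by
  rw [Fin.sum_univ_succ, excFixWeight_decomposeFin_symm_zero, ← Equiv.sum_comp σ]
  simp only [excFixWeight_decomposeFin_symm_succ, sum_add_distrib, ← sum_filter, sum_const]
  rw [excFixWeight, eulerDerivation_monomial3]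
  rfl

end Excedances

theorem excFixPoly_succ (n : ℕ) :
    excFixPoly (n + 1) = X 2 * excFixPoly n + eulerDerivation (excFixPoly n) := by
  simp only [excFixPoly, mul_sum, map_sum, ← sum_add_distrib]
  rw [← (decomposeFin (n := n)).symm.sum_comp, Fintype.sum_prod_type_right]
  exact sum_congr rfl fun σ _ => sum_excFixWeight_decomposeFin_symm σ

section Insertion

def insertMax {n : ℕ} (k : Fin (n + 1)) (σ : Perm (Fin n)) : Perm (Fin (n + 1)) :=
  ((finSuccEquiv' k).trans (optionCongr σ)).trans (finSuccEquiv' (Fin.last n)).symm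

variable {n : ℕ}

@[simp]
theorem insertMax_apply_self (k : Fin (n + 1)) (σ : Perm (Fin n)) :
    insertMax k σ k = Fin.last n := by
  simp [insertMax]

@[simp]
theorem insertMax_apply_succAbove (k : Fin (n + 1)) (σ : Perm (Fin n)) (i : Fin n) :
    insertMax k σ (k.succAbove i) = (σ i).castSucc := by
  simp [insertMax, ← Fin.succAbove_last]

theorem insertMax_bijective :
    Function.Bijective fun p : Fin (n + 1) × Perm (Fin n) => insertMax p.1 p.2 := by
  refine (Fintype.bijective_iff_injective_and_card _).2
    ⟨?_, by simp [Fintype.card_perm, Nat.factorial_succ]⟩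
  rintro ⟨k, σ⟩ ⟨k', σ'⟩ h
  simp only at h
  obtain rfl : k = k' := by
    by_contra hne
    obtain ⟨i, hi⟩ := Fin.exists_succAbove_eq hne
    have := insertMax_apply_self k σ
    rw [h, ← hi, insertMax_apply_succAbove] at this
    exact (Fin.castSucc_lt_last _).ne this
  refine Prod.ext rfl (Equiv.ext fun i => Fin.castSucc_injective _ ?_)
  rw [← insertMax_apply_succAbove, ← insertMax_apply_succAbove, h]

theorem sum_perm_succ_eq_sum_insertMax {M : Type*} [AddCommMonoid M]
    (f : Perm (Fin (n + 1)) → M) :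
    ∑ π, f π = ∑ σ : Perm (Fin n), ∑ k, f (insertMax k σ) := by
  rw [← Fintype.sum_bijective _ insertMax_bijective _ f (fun _ => rfl),
    Fintype.sum_prod_type_right]

def insertAt (w : ℕ → ℕ) (k x : ℕ) (j : ℕ) : ℕ :=
  if j < k then w j else if j = k then x else w (j - 1)

section insertAt

variable (w : ℕ → ℕ) {k x j : ℕ}

@[simp]
theorem insertAt_of_lt (h : j < k) : insertAt w k x j = w j := if_pos h

@[simp]
theorem insertAt_self : insertAt w k x k = x := by simp [insertAt]

@[simp]
theorem insertAt_of_gt (h : k < j) : insertAt w k x j = w (j - 1) := by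
  simp [insertAt, h.not_gt, h.ne']

end insertAt

theorem permWord_insertMax (k : Fin (n + 1)) (σ : Perm (Fin n)) :
    permWord (insertMax k σ) = insertAt (permWord σ) k (n + 1) := by
  funext j
  rcases lt_trichotomy j k with h | rfl | h
  · have hj : j < n := by omega
    have : (⟨j, by omega⟩ : Fin (n + 1)) = k.succAbove ⟨j, hj⟩ := by
      rw [Fin.succAbove_of_castSucc_lt _ _ h]; rfl
    simp [permWord, h, hj, hj.le, this]
  · simp [permWord, Fin.is_le]
  · rcases lt_or_ge j (n + 1) with hj | hj
    · have : (⟨j, hj⟩ : Fin (n + 1)) = k.succAbove ⟨j - 1, by omega⟩ := by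
        rw [Fin.succAbove_of_le_castSucc _ _ (by simp only [Fin.castSucc_mk, Fin.le_def]; omega)]
        ext; simp only [Fin.succ_mk]; omega
      simp [permWord, h, hj, this, show j - 1 < n by omega]
    · simp [permWord, h, show ¬ j < n + 1 by omega, show ¬ j - 1 < n by omega]

end Insertion

section PairCount

def pairCount (P : ℕ → ℕ → Prop) [DecidableRel P] (w : ℕ → ℕ) (m : ℕ) : ℕ :=
  #{j ∈ range m | P (w j) (w (j + 1))}

variable (P : ℕ → ℕ → Prop) [DecidableRel P]

theorem pairCount_succ (w : ℕ → ℕ) (m : ℕ) :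
    pairCount P w (m + 1) = pairCount P w m + if P (w m) (w (m + 1)) then 1 else 0 := by
  simp only [pairCount, card_filter, sum_range_succ]

theorem pairCount_congr {v w : ℕ → ℕ} {m : ℕ} (h : ∀ j ≤ m, v j = w j) :
    pairCount P v m = pairCount P w m := by
  simp only [pairCount]
  refine congrArg card (filter_congr fun j hj => ?_)
  rw [mem_range] at hj
  rw [h j hj.le, h (j + 1) hj]

theorem pairCount_insertAt_zero (w : ℕ → ℕ) (x m : ℕ) :
    pairCount P (insertAt w 0 x) (m + 1) = pairCount P w m + if P x (w 0) then 1 else 0 := by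
  induction m with
  | zero =>
    rw [pairCount_succ]
    simp [pairCount]
  | succ m ih =>
    rw [pairCount_succ, ih, pairCount_succ, insertAt_of_gt _ (by omega : 0 < m + 1),
      insertAt_of_gt _ (by omega : 0 < m + 1 + 1)]
    simp only [add_tsub_cancel_right]
    omega

theorem pairCount_insertAt_succ (w : ℕ → ℕ) (x : ℕ) {k m : ℕ} (hk : k < m) :
    pairCount P (insertAt w (k + 1) x) (m + 1) + (if P (w k) (w (k + 1)) then 1 else 0) =
      pairCount P w m + (if P (w k) x then 1 else 0) + if P x (w (k + 1)) then 1 else 0 := by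
  induction m, hk using Nat.le_induction with
  | base =>
    have hlow : pairCount P (insertAt w (k + 1) x) k = pairCount P w k :=
      pairCount_congr P fun j hj => insertAt_of_lt w (Nat.lt_succ_of_le hj)
    rw [pairCount_succ _ _ (k + 1), pairCount_succ _ _ k, pairCount_succ _ _ k, hlow,
      insertAt_of_lt w (by omega : k < k + 1), insertAt_self,
      insertAt_of_gt w (by omega : k + 1 < k + 1 + 1)]
    simp only [add_tsub_cancel_right]
    omega
  | succ m hkm ih =>
    rw [pairCount_succ, pairCount_succ P w, insertAt_of_gt _ (by omega : k + 1 < m + 1),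
      insertAt_of_gt _ (by omega : k + 1 < m + 1 + 1)]
    simp only [add_tsub_cancel_right]
    omega

end PairCount

section PermWord

variable {n : ℕ}

theorem permWord_of_lt (σ : Perm (Fin n)) {j : ℕ} (hj : j < n) :
    permWord σ j = σ ⟨j, hj⟩ + 1 :=
  dif_pos hj

theorem permWord_of_le (σ : Perm (Fin n)) {j : ℕ} (hj : n ≤ j) : permWord σ j = 0 :=
  dif_neg (by omega)

theorem permWord_le (σ : Perm (Fin n)) (j : ℕ) : permWord σ j ≤ n := by
  unfold permWord; split_ifs <;> omega

theorem permWord_pos (σ : Perm (Fin n)) {j : ℕ} (hj : j < n) : 0 < permWord σ j := by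
  rw [permWord_of_lt σ hj]; omega

theorem permWord_succ_ne (σ : Perm (Fin n)) {j : ℕ} (hj : j < n) :
    permWord σ (j + 1) ≠ permWord σ j := by
  rcases lt_or_ge (j + 1) n with h | h
  · rw [permWord_of_lt σ h, permWord_of_lt σ hj]
    simp [Fin.val_inj]
  · rw [permWord_of_le σ h]; exact (permWord_pos σ hj).ne

theorem card_filter_permWord_eq_last (π : Perm (Fin (n + 1))) :
    #{j ∈ range (n + 1) | permWord π j = n + 1} = 1 := by
  refine card_eq_one.2 ⟨π.symm (Fin.last n), ext fun j => ?_⟩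
  simp only [mem_filter, mem_range, mem_singleton]
  constructor
  · rintro ⟨hj, hw⟩
    have : π ⟨j, hj⟩ = Fin.last n := Fin.ext (by simpa [permWord_of_lt π hj] using hw)
    rw [← this, Equiv.symm_apply_apply]
  · rintro rfl
    refine ⟨Fin.isLt _, ?_⟩
    rw [permWord_of_lt π (Fin.isLt _)]
    simp

/- Counting pairs over `range (n + 1)` for `π ∈ S_{n+1}` also sees the pair `(π(n+1), 0)` formed
with the zero padding of `permWord`; it is a descent and nothing else. -/

theorem pairCount_permWord_succ (P : ℕ → ℕ → Prop) [DecidableRel P]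
    (π : Perm (Fin (n + 1))) :
    pairCount P (permWord π) (n + 1) =
      pairCount P (permWord π) n + if P (permWord π n) 0 then 1 else 0 := by
  rw [pairCount_succ, permWord_of_le π le_rfl]

theorem bascNum_eq_pairCount (π : Perm (Fin (n + 1))) :
    bascNum π = pairCount (fun a b => a + 2 ≤ b) (permWord π) (n + 1) := by
  rw [pairCount_permWord_succ, if_neg (by omega), add_zero]; rfl

theorem sucNum_eq_pairCount (π : Perm (Fin (n + 1))) :
    sucNum π = pairCount (fun a b => b = a + 1) (permWord π) (n + 1) := by
  rw [pairCount_permWord_succ, if_neg (by omega), add_zero]; rfl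

theorem ascNum_eq_pairCount (π : Perm (Fin (n + 1))) :
    ascNum π = pairCount (· < ·) (permWord π) (n + 1) := by
  rw [pairCount_permWord_succ, if_neg (by omega), add_zero]; rfl

theorem desNum_add_one_eq_pairCount (π : Perm (Fin (n + 1))) :
    desNum π + 1 = pairCount (fun a b => b < a) (permWord π) (n + 1) := by
  rw [pairCount_permWord_succ, if_pos (permWord_pos π n.lt_succ_self)]; rfl

variable (P : ℕ → ℕ → Prop) [DecidableRel P] (σ : Perm (Fin n))

theorem pairCount_permWord_insertMax_zero :
    pairCount P (permWord (insertMax 0 σ)) (n + 1) =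
      pairCount P (permWord σ) n + if P (n + 1) (permWord σ 0) then 1 else 0 := by
  rw [permWord_insertMax, Fin.val_zero]
  exact pairCount_insertAt_zero P _ _ _

theorem pairCount_permWord_insertMax_succ (j : Fin n) :
    pairCount P (permWord (insertMax j.succ σ)) (n + 1) +
        (if P (permWord σ j) (permWord σ (j + 1)) then 1 else 0) =
      pairCount P (permWord σ) n + (if P (permWord σ j) (n + 1) then 1 else 0) +
        if P (n + 1) (permWord σ (j + 1)) then 1 else 0 := by
  rw [permWord_insertMax, Fin.val_succ]
  exact pairCount_insertAt_succ P _ _ j.isLt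

end PermWord

theorem card_filter_fin_eq_card_filter_range (p : ℕ → Prop) [DecidablePred p] (n : ℕ) :
    #{j : Fin n | p j} = #{j ∈ range n | p j} := by
  simp only [card_filter]
  exact Fin.sum_univ_eq_sum_range (fun j => if p j then 1 else 0) n

section TrivEuler

noncomputable def trivWeight {n : ℕ} (π : Perm (Fin n)) : MvPolynomial (Fin 3) ℤ :=
  monomial3 (bascNum π) (desNum π) (sucNum π)

variable {m : ℕ} (σ : Perm (Fin (m + 1)))

theorem trivWeight_insertMax_zero : trivWeight (insertMax 0 σ) = X 1 * trivWeight σ := by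
  have hb := pairCount_permWord_insertMax_zero (fun a b => a + 2 ≤ b) σ
  have hd := pairCount_permWord_insertMax_zero (fun a b => b < a) σ
  have hs := pairCount_permWord_insertMax_zero (fun a b => b = a + 1) σ
  rw [← bascNum_eq_pairCount, ← bascNum_eq_pairCount] at hb
  rw [← desNum_add_one_eq_pairCount, ← desNum_add_one_eq_pairCount] at hd
  rw [← sucNum_eq_pairCount, ← sucNum_eq_pairCount] at hs
  have := permWord_le σ 0
  rw [trivWeight, trivWeight, X_one_mul_monomial3,
    show bascNum (insertMax 0 σ) = bascNum σ by split_ifs at hb <;> omega,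
    show desNum (insertMax 0 σ) = desNum σ + 1 by split_ifs at hd <;> omega,
    show sucNum (insertMax 0 σ) = sucNum σ by split_ifs at hs <;> omega]

theorem bascNum_desNum_sucNum_insertMax_succ (j : Fin (m + 1)) :
    bascNum (insertMax j.succ σ) + (if permWord σ j + 2 ≤ permWord σ (j + 1) then 1 else 0) =
        bascNum σ + (if permWord σ j = m + 1 then 0 else 1) ∧
      desNum (insertMax j.succ σ) + (if permWord σ (j + 1) < permWord σ j then 1 else 0) =
        desNum σ + 1 ∧
      sucNum (insertMax j.succ σ) + (if permWord σ (j + 1) = permWord σ j + 1 then 1 else 0) =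
        sucNum σ + (if permWord σ j = m + 1 then 1 else 0) := by
  have hb := pairCount_permWord_insertMax_succ (fun a b => a + 2 ≤ b) σ j
  have hd := pairCount_permWord_insertMax_succ (fun a b => b < a) σ j
  have hs := pairCount_permWord_insertMax_succ (fun a b => b = a + 1) σ j
  rw [← bascNum_eq_pairCount, ← bascNum_eq_pairCount] at hb
  rw [← desNum_add_one_eq_pairCount, ← desNum_add_one_eq_pairCount] at hd
  rw [← sucNum_eq_pairCount, ← sucNum_eq_pairCount] at hs
  have := permWord_pos σ j.isLt
  have := permWord_le σ j
  have := permWord_le σ (j + 1)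
  refine ⟨?_, ?_, ?_⟩
  · split_ifs at hb ⊢ <;> omega
  · split_ifs at hd ⊢ <;> omega
  · split_ifs at hs ⊢ <;> omega

/-- The largest letter `m + 1` of `σ` always starts a descent (possibly the final one against the
padding); inserting `m + 2` right after it creates a succession rather than a big ascent, which the
first summand corrects. -/
theorem trivWeight_insertMax_succ (j : Fin (m + 1)) :
    trivWeight (insertMax j.succ σ) =
      (if permWord σ j = m + 1 then
          monomial3 (bascNum σ) (desNum σ) (sucNum σ + 1) -
            monomial3 (bascNum σ + 1) (desNum σ) (sucNum σ) else 0) +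
      (if permWord σ (j + 1) < permWord σ j then
          monomial3 (bascNum σ + 1) (desNum σ) (sucNum σ) else 0) +
      (if permWord σ j + 2 ≤ permWord σ (j + 1) then
          monomial3 (bascNum σ) (desNum σ + 1) (sucNum σ) else 0) +
      (if permWord σ (j + 1) = permWord σ j + 1 then
          monomial3 (bascNum σ + 1) (desNum σ + 1) (sucNum σ - 1) else 0) := by
  obtain ⟨hb, hd, hs⟩ := bascNum_desNum_sucNum_insertMax_succ σ j
  set π := insertMax j.succ σ
  have := permWord_le σ j
  have := permWord_le σ (j + 1)
  obtain h | h | h : permWord σ (j + 1) < permWord σ j ∨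
      permWord σ j + 2 ≤ permWord σ (j + 1) ∨ permWord σ (j + 1) = permWord σ j + 1 := by
    have := permWord_succ_ne σ j.isLt; omega
  · by_cases hmax : permWord σ j = m + 1
    · obtain ⟨eb, ed, es⟩ : bascNum π = bascNum σ ∧ desNum π = desNum σ ∧
          sucNum π = sucNum σ + 1 := by
        split_ifs at hb hd hs <;> omega
      rw [trivWeight, eb, ed, es, if_pos hmax, if_pos h, if_neg (by omega), if_neg (by omega)]
      abel
    · obtain ⟨eb, ed, es⟩ : bascNum π = bascNum σ + 1 ∧ desNum π = desNum σ ∧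
          sucNum π = sucNum σ := by
        split_ifs at hb hd hs <;> omega
      rw [trivWeight, eb, ed, es, if_neg hmax, if_pos h, if_neg (by omega), if_neg (by omega)]
      abel
  · obtain ⟨eb, ed, es⟩ : bascNum π = bascNum σ ∧ desNum π = desNum σ + 1 ∧
        sucNum π = sucNum σ := by
      split_ifs at hb hd hs <;> omega
    rw [trivWeight, eb, ed, es, if_neg (by omega), if_neg (by omega), if_pos h, if_neg (by omega)]
    abel
  · obtain ⟨eb, ed, es⟩ : bascNum π = bascNum σ + 1 ∧ desNum π = desNum σ + 1 ∧
        sucNum π = sucNum σ - 1 := by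
      split_ifs at hb hd hs <;> omega
    rw [trivWeight, eb, ed, es, if_neg (by omega), if_neg (by omega), if_neg (by omega), if_pos h]
    abel

theorem sum_trivWeight_insertMax :
    ∑ k, trivWeight (insertMax k σ) =
      (X 1 + X 2) * trivWeight σ + eulerDerivation (trivWeight σ) := by
  have hmax : #{j : Fin (m + 1) | permWord σ j = m + 1} = 1 := by
    rw [card_filter_fin_eq_card_filter_range (fun j => permWord σ j = m + 1),
      card_filter_permWord_eq_last]
  have hd : #{j : Fin (m + 1) | permWord σ (j + 1) < permWord σ j} = desNum σ + 1 := by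
    rw [card_filter_fin_eq_card_filter_range (fun j => permWord σ (j + 1) < permWord σ j),
      desNum_add_one_eq_pairCount]; rfl
  have hb : #{j : Fin (m + 1) | permWord σ j + 2 ≤ permWord σ (j + 1)} = bascNum σ := by
    rw [card_filter_fin_eq_card_filter_range (fun j => permWord σ j + 2 ≤ permWord σ (j + 1)),
      bascNum_eq_pairCount]; rfl
  have hs : #{j : Fin (m + 1) | permWord σ (j + 1) = permWord σ j + 1} = sucNum σ := by
    rw [card_filter_fin_eq_card_filter_range (fun j => permWord σ (j + 1) = permWord σ j + 1),
      sucNum_eq_pairCount]; rfl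
  rw [Fin.sum_univ_succ, trivWeight_insertMax_zero]
  simp only [trivWeight_insertMax_succ, sum_add_distrib, ← sum_filter, sum_const,
    hmax, hd, hb, hs]
  rw [trivWeight, eulerDerivation_monomial3, X_one_mul_monomial3, add_mul, X_one_mul_monomial3,
    X_two_mul_monomial3, add_smul, one_smul, one_smul]
  abel

end TrivEuler

theorem trivEuler_succ_succ (n : ℕ) :
    trivEuler (n + 2) = (X 1 + X 2) * trivEuler (n + 1) + eulerDerivation (trivEuler (n + 1)) := by
  simp only [trivEuler, mul_sum, map_sum, ← sum_add_distrib]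
  rw [sum_perm_succ_eq_sum_insertMax]
  exact sum_congr rfl fun σ _ => sum_trivWeight_insertMax σ

section BivEuler

noncomputable def bivWeight {n : ℕ} (π : Perm (Fin n)) : MvPolynomial (Fin 3) ℤ :=
  monomial3 (ascNum π) (desNum π + 1) 0

variable {m : ℕ} (σ : Perm (Fin (m + 1)))

theorem bivWeight_insertMax_zero : bivWeight (insertMax 0 σ) = X 1 * bivWeight σ := by
  have ha := pairCount_permWord_insertMax_zero (· < ·) σ
  have hd := pairCount_permWord_insertMax_zero (fun a b => b < a) σ
  rw [← ascNum_eq_pairCount, ← ascNum_eq_pairCount] at ha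
  rw [← desNum_add_one_eq_pairCount, ← desNum_add_one_eq_pairCount] at hd
  have := permWord_le σ 0
  rw [bivWeight, bivWeight, X_one_mul_monomial3,
    show ascNum (insertMax 0 σ) = ascNum σ by split_ifs at ha <;> omega,
    show desNum (insertMax 0 σ) = desNum σ + 1 by split_ifs at hd <;> omega]

theorem bivWeight_insertMax_succ (j : Fin (m + 1)) :
    bivWeight (insertMax j.succ σ) =
      (if permWord σ (j + 1) < permWord σ j then
          monomial3 (ascNum σ + 1) (desNum σ + 1) 0 else 0) +
      (if permWord σ j < permWord σ (j + 1) then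
          monomial3 (ascNum σ) (desNum σ + 2) 0 else 0) := by
  have ha := pairCount_permWord_insertMax_succ (· < ·) σ j
  have hd := pairCount_permWord_insertMax_succ (fun a b => b < a) σ j
  rw [← ascNum_eq_pairCount, ← ascNum_eq_pairCount] at ha
  rw [← desNum_add_one_eq_pairCount, ← desNum_add_one_eq_pairCount] at hd
  set π := insertMax j.succ σ
  have := permWord_le σ j
  have := permWord_le σ (j + 1)
  rcases lt_or_gt_of_ne (permWord_succ_ne σ j.isLt) with h | h
  · obtain ⟨ea, ed⟩ : ascNum π = ascNum σ + 1 ∧ desNum π = desNum σ := by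
      split_ifs at ha hd <;> omega
    rw [bivWeight, ea, ed, if_pos h, if_neg h.not_gt, add_zero]
  · obtain ⟨ea, ed⟩ : ascNum π = ascNum σ ∧ desNum π = desNum σ + 1 := by
      split_ifs at ha hd <;> omega
    rw [bivWeight, ea, ed, if_neg h.not_gt, if_pos h, zero_add]

theorem sum_bivWeight_insertMax :
    ∑ k, bivWeight (insertMax k σ) = X 1 * bivWeight σ + eulerDerivation (bivWeight σ) := by
  have hd : #{j : Fin (m + 1) | permWord σ (j + 1) < permWord σ j} = desNum σ + 1 := by
    rw [card_filter_fin_eq_card_filter_range (fun j => permWord σ (j + 1) < permWord σ j),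
      desNum_add_one_eq_pairCount]; rfl
  have ha : #{j : Fin (m + 1) | permWord σ j < permWord σ (j + 1)} = ascNum σ := by
    rw [card_filter_fin_eq_card_filter_range (fun j => permWord σ j < permWord σ (j + 1)),
      ascNum_eq_pairCount]; rfl
  rw [Fin.sum_univ_succ, bivWeight_insertMax_zero]
  simp only [bivWeight_insertMax_succ, sum_add_distrib, ← sum_filter, sum_const, hd, ha]
  rw [bivWeight, eulerDerivation_monomial3, X_one_mul_monomial3, zero_smul, add_zero]
  abel

end BivEuler

theorem bivEuler_succ (n : ℕ) :
    bivEuler (n + 1) = X 1 * bivEuler n + eulerDerivation (bivEuler n) := by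
  cases n with
  | zero => simp [bivEuler, ascNum, desNum]
  | succ m =>
    have hweight : ∀ {k : ℕ} (π : Perm (Fin k)),
        X 0 ^ ascNum π * X 1 ^ (desNum π + 1) = bivWeight π := fun π => by
      simp [bivWeight, monomial3]
    simp only [bivEuler, hweight, mul_sum, map_sum, ← sum_add_distrib]
    rw [sum_perm_succ_eq_sum_insertMax]
    exact sum_congr rfl fun σ _ => sum_bivWeight_insertMax σ

theorem trivEuler_succ_eq_sum_antidiagonal (n : ℕ) :
    trivEuler (n + 1) =
      ∑ ij ∈ antidiagonal n, n.choose ij.1 • (bivEuler ij.1 * excFixPoly ij.2) := by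
  induction n with
  | zero => simp [trivEuler, bascNum, desNum, sucNum, excFixPoly, excNum, aexcNum, fixNum, bivEuler]
  | succ n ih =>
    rw [trivEuler_succ_succ, ih, sum_antidiagonal_choose_nsmul_succ_of_derivation eulerDerivation
      _ _ _ _ bivEuler_succ excFixPoly_succ]

/-- `A_{n+1}(x,y,s) = Σ_{i=0}^n C(n,i) Ā_i(x,y) C_{n−i}(x,y,s)`. -/
theorem stmt4 (n : ℕ) :
    trivEuler (n + 1) =
      ∑ i ∈ range (n + 1),
        MvPolynomial.C (n.choose i : ℤ) * bivEuler i * excFixPoly (n - i) := by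
  rw [trivEuler_succ_eq_sum_antidiagonal, Nat.sum_antidiagonal_eq_sum_range_succ_mk]
  simp only [nsmul_eq_mul, map_natCast, mul_assoc]
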